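/- arXiv:math/0512108 — 4 statements merged into one kernel-verified Lean document; each statement's English description precedes it below -/
import Mathlib

section
/- Let P = k[x_0,…,x_n] be a polynomial ring over a field, f ∈ P a nonzero homogeneous polynomial, R = P/(f), and let E be a finitely generated graded R-module which, viewed as a P-module, has projective dimension 1, with graded free resolution 0 → L_1 →^φ L_0 → E → 0 over P where L_0, L_1 are graded free of the same finite rank m. Then there exists a P-linear map ψ : L_0 → L_1 such that ψ ∘ φ = f·id_{L_1} and φ ∘ ψ = f·id_{L_0} (a matrix factorization of f). -/
/-- Existence of a matrix factorization: if `P = k[x₀,…,xₙ]`, `f` is a nonzero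
homogeneous polynomial of positive degree, and `E` is a `P`-module annihilated by `f`
with a length-one free resolution `0 → P^m →^φ P^m → E → 0` (so `φ` is injective and
`f·P^m ⊆ im φ`), then there is `ψ : P^m → P^m` with `ψ ∘ φ = f·id` and
`φ ∘ ψ = f·id`. -/
theorem matrix_factorization_exists (k : Type*) [Field k] (n m : ℕ)
    (f : MvPolynomial (Fin (n + 1)) k) (hf : f ≠ 0) (d : ℕ) (hd : 0 < d)
    (hhom : f.IsHomogeneous d)
    (φ : (Fin m → MvPolynomial (Fin (n + 1)) k) →ₗ[MvPolynomial (Fin (n + 1)) k]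
      (Fin m → MvPolynomial (Fin (n + 1)) k))
    (hinj : Function.Injective φ)
    (hann : ∀ x : Fin m → MvPolynomial (Fin (n + 1)) k, f • x ∈ LinearMap.range φ) :
    ∃ ψ : (Fin m → MvPolynomial (Fin (n + 1)) k) →ₗ[MvPolynomial (Fin (n + 1)) k]
      (Fin m → MvPolynomial (Fin (n + 1)) k),
      ψ ∘ₗ φ = f • LinearMap.id ∧ φ ∘ₗ ψ = f • LinearMap.id := by
  classical
  have hspec : ∀ x : Fin m → MvPolynomial (Fin (n + 1)) k, φ (Classical.choose (hann x)) = f • x := fun x =>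
    Classical.choose_spec (hann x)
  refine ⟨{ toFun := fun x => Classical.choose (hann x)
            map_add' := ?_
            map_smul' := ?_ }, ?_, ?_⟩
  · intro x y
    apply hinj
    rw [map_add, hspec, hspec, hspec, smul_add]
  · intro c x
    apply hinj
    rw [map_smul, hspec, hspec, smul_comm]
    rfl
  · apply LinearMap.ext; intro x
    apply hinj
    simp only [LinearMap.comp_apply, LinearMap.coe_mk, AddHom.coe_mk, LinearMap.smul_apply,
      LinearMap.id_apply]
    rw [hspec, map_smul]
  · apply LinearMap.ext; intro x
    simp only [LinearMap.comp_apply, LinearMap.coe_mk, AddHom.coe_mk, LinearMap.smul_apply,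
      LinearMap.id_apply]
    exact hspec x
end

section
/- Let P be a commutative ring, f ∈ P a non-zerodivisor, and (φ, ψ) a matrix factorization of f with φ, ψ ∈ M_m(P), φψ = ψφ = f·I_m. Set R = P/(f) and let φ̄, ψ̄ be the reductions of φ, ψ modulo f. Then the sequence of R-modules ⋯ → R^m →^{ψ̄} R^m →^{φ̄} R^m →^{ψ̄} R^m → ⋯ is exact, i.e., ker φ̄ = im ψ̄ and ker ψ̄ = im φ̄. -/
/-!
Reduction mod `f` of `φψ = f·1` gives `φ̄ψ̄ = 0`. Conversely, if `φ̄ x̄ = 0`, lift `x̄` to `x`;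
then `φ x = f y = φ (ψ y)`, and `φ` is injective because `ψφ = f·1` with `f` a non-zerodivisor,
so `x = ψ y` and `x̄ = ψ̄ ȳ`.
-/

open Matrix Function

section

variable {P : Type*} [CommRing P] {m n : Type*} {f : P}

theorem RingHom.map_mulVec_comp {R S : Type*} [NonAssocSemiring R] [NonAssocSemiring S]
    [Fintype n] (g : R →+* S) (M : Matrix m n R) (v : n → R) : M.map g *ᵥ (g ∘ v) = g ∘ (M *ᵥ v) :=
  funext fun i => (g.map_mulVec M v i).symm

theorem Matrix.mulVec_injective_of_mul_eq_smul_one [Fintype m] [Fintype n] [DecidableEq n]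
    (hf : f ∈ nonZeroDivisors P)
    {φ : Matrix m n P} {ψ : Matrix n m P} (h : ψ * φ = f • 1) : Injective φ.mulVec := by
  intro x x' hxx'
  have hfx : f • x = f • x' := by
    simpa only [mulVec_mulVec, h, smul_mulVec, one_mulVec] using congrArg ψ.mulVec hxx'
  funext i
  exact (isRegular_iff_mem_nonZeroDivisors.mpr hf).left (congrFun hfx i)

theorem Ideal.Quotient.mk_span_singleton_comp_eq_zero_iff (v : n → P) :
    Ideal.Quotient.mk (Ideal.span {f}) ∘ v = 0 ↔ ∃ w : n → P, v = f • w := by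
  constructor
  · intro h
    choose w hw using fun i =>
      Ideal.mem_span_singleton'.mp (Ideal.Quotient.eq_zero_iff_mem.mp (congrFun h i))
    exact ⟨w, funext fun i => by rw [← hw i, Pi.smul_apply, smul_eq_mul, mul_comm]⟩
  · rintro ⟨w, rfl⟩
    funext i
    simp [Ideal.Quotient.mk_singleton_self]

theorem Matrix.map_mul_map_quotient_span_eq_zero [Fintype n] [DecidableEq m]
    {φ : Matrix m n P} {ψ : Matrix n m P} (h : φ * ψ = f • 1) :
    φ.map (Ideal.Quotient.mk (Ideal.span {f})) * ψ.map (Ideal.Quotient.mk (Ideal.span {f})) =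
      0 := by
  rw [← Matrix.map_mul, h]
  ext i j
  simp [Ideal.Quotient.mk_singleton_self]

theorem Matrix.exact_map_quotient_span_of_mul_eq_smul_one [Fintype m] [Fintype n]
    [DecidableEq m] [DecidableEq n] (hf : f ∈ nonZeroDivisors P)
    {φ : Matrix m n P} {ψ : Matrix n m P} (h₁ : φ * ψ = f • 1) (h₂ : ψ * φ = f • 1) :
    Exact (ψ.map (Ideal.Quotient.mk (Ideal.span {f}))).mulVecLin
      (φ.map (Ideal.Quotient.mk (Ideal.span {f}))).mulVecLin := by
  intro xq
  constructor
  · intro hxq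
    obtain ⟨x, rfl⟩ := Ideal.Quotient.mk_surjective.comp_left xq
    obtain ⟨y, hy⟩ := (Ideal.Quotient.mk_span_singleton_comp_eq_zero_iff (φ *ᵥ x)).mp <| by
      rw [← RingHom.map_mulVec_comp]; exact hxq
    have hx : x = ψ *ᵥ y := mulVec_injective_of_mul_eq_smul_one hf h₂ <| by
      rw [hy, mulVec_mulVec, h₁, smul_mulVec, one_mulVec]
    refine ⟨Ideal.Quotient.mk _ ∘ y, ?_⟩
    rw [mulVecLin_apply, RingHom.map_mulVec_comp, hx]
  · rintro ⟨yq, rfl⟩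
    simp only [mulVecLin_apply, mulVec_mulVec, map_mul_map_quotient_span_eq_zero h₁, zero_mulVec]

end

/-- Exactness of the 2-periodic complex associated to a matrix factorization:
if `φψ = ψφ = f·I_m` with `f` a non-zerodivisor and `R = P/(f)`, then the
complex `⋯ → R^m →^ψ̄ R^m →^φ̄ R^m →^ψ̄ R^m → ⋯` is exact, i.e.
`ker φ̄ = im ψ̄` and `ker ψ̄ = im φ̄`. -/
theorem matrix_factorization_exact (P : Type*) [CommRing P] (m : ℕ) (f : P)
    (hf : f ∈ nonZeroDivisors P)
    (φ ψ : Matrix (Fin m) (Fin m) P)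
    (h1 : φ * ψ = f • (1 : Matrix (Fin m) (Fin m) P))
    (h2 : ψ * φ = f • (1 : Matrix (Fin m) (Fin m) P)) :
    Function.Exact
        ((ψ.map (Ideal.Quotient.mk (Ideal.span {f}))).mulVecLin)
        ((φ.map (Ideal.Quotient.mk (Ideal.span {f}))).mulVecLin) ∧
      Function.Exact
        ((φ.map (Ideal.Quotient.mk (Ideal.span {f}))).mulVecLin)
        ((ψ.map (Ideal.Quotient.mk (Ideal.span {f}))).mulVecLin) :=
  ⟨exact_map_quotient_span_of_mul_eq_smul_one hf h1 h2,
    exact_map_quotient_span_of_mul_eq_smul_one hf h2 h1⟩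
end

section
/- Let P be a commutative ring and f ∈ P. If (φ, ψ) is an m×m matrix factorization of f (φψ = ψφ = f·I_m) and x is a new variable, so that we work in P[x], then the 2m×2m block matrices Φ = [[φ, x·I],[−x·I, ψ]] and Ψ = [[ψ, −x·I],[x·I, φ]] satisfy ΦΨ = ΨΦ = (f + x²)·I_{2m}, i.e., (Φ, Ψ) is a matrix factorization of f + x² over P[x]. -/
open Polynomial


lemma knorrer_key {R : Type*} [CommRing R] {m : ℕ} (g x : R) (A B : Matrix (Fin m) (Fin m) R)
    (hAB : A * B = g • 1) (hBA : B * A = g • 1) :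
    Matrix.fromBlocks A (x • 1) (-(x • 1)) B * Matrix.fromBlocks B (-(x • 1)) (x • 1) A
      = (g + x ^ 2) • (1 : Matrix (Fin m ⊕ Fin m) (Fin m ⊕ Fin m) R) := by
  rw [Matrix.fromBlocks_multiply, ← Matrix.fromBlocks_one, Matrix.fromBlocks_smul]
  congr 1 <;> simp [hAB, hBA, Matrix.smul_mul, Matrix.mul_smul, smul_smul, add_smul, sq,
    mul_comm, add_comm]

lemma knorrer_map {P : Type*} [CommRing P] {m : ℕ} {f : P}
    {φ ψ : Matrix (Fin m) (Fin m) P}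
    (h1 : φ * ψ = f • (1 : Matrix (Fin m) (Fin m) P)) :
    (φ.map Polynomial.C) * (ψ.map Polynomial.C)
      = (Polynomial.C f) • (1 : Matrix (Fin m) (Fin m) P[X]) := by
  rw [← Matrix.map_mul, h1]
  ext i j
  simp [Matrix.one_apply, apply_ite]

/-- Knörrer's construction: from a matrix factorization `(φ, ψ)` of `f` over `P`,
the block matrices `Φ = [[φ, x·I],[−x·I, ψ]]` and `Ψ = [[ψ, −x·I],[x·I, φ]]` form a
matrix factorization of `f + x²` over `P[x]`. -/
theorem knorrer_matrix_factorization (P : Type*) [CommRing P] (m : ℕ) (f : P)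
    (φ ψ : Matrix (Fin m) (Fin m) P)
    (h1 : φ * ψ = f • (1 : Matrix (Fin m) (Fin m) P))
    (h2 : ψ * φ = f • (1 : Matrix (Fin m) (Fin m) P)) :
    Matrix.fromBlocks (φ.map Polynomial.C)
        ((X : P[X]) • (1 : Matrix (Fin m) (Fin m) P[X]))
        (-((X : P[X]) • (1 : Matrix (Fin m) (Fin m) P[X])))
        (ψ.map Polynomial.C) *
      Matrix.fromBlocks (ψ.map Polynomial.C)
        (-((X : P[X]) • (1 : Matrix (Fin m) (Fin m) P[X])))
        ((X : P[X]) • (1 : Matrix (Fin m) (Fin m) P[X]))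
        (φ.map Polynomial.C) =
      (Polynomial.C f + X ^ 2) • (1 : Matrix (Fin m ⊕ Fin m) (Fin m ⊕ Fin m) P[X]) ∧
    Matrix.fromBlocks (ψ.map Polynomial.C)
        (-((X : P[X]) • (1 : Matrix (Fin m) (Fin m) P[X])))
        ((X : P[X]) • (1 : Matrix (Fin m) (Fin m) P[X]))
        (φ.map Polynomial.C) *
      Matrix.fromBlocks (φ.map Polynomial.C)
        ((X : P[X]) • (1 : Matrix (Fin m) (Fin m) P[X]))
        (-((X : P[X]) • (1 : Matrix (Fin m) (Fin m) P[X])))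
        (ψ.map Polynomial.C) =
      (Polynomial.C f + X ^ 2) • (1 : Matrix (Fin m ⊕ Fin m) (Fin m ⊕ Fin m) P[X]) := by
  constructor
  · exact knorrer_key (Polynomial.C f) (X : P[X]) (φ.map Polynomial.C) (ψ.map Polynomial.C)
      (knorrer_map h1) (knorrer_map h2)
  · simpa [neg_smul, neg_neg, neg_sq] using
      knorrer_key (Polynomial.C f) (-(X : P[X])) (ψ.map Polynomial.C) (φ.map Polynomial.C)
      (knorrer_map h2) (knorrer_map h1)
end

section
/- Let P = k[x_0,…,x_n] and let f ∈ P be a nonzero homogeneous polynomial with hypersurface ring R = P/(f). Let (φ, ψ) be a graded matrix factorization of f with φ : L_1 → L_0 between graded free P-modules of rank m, and let M = coker φ regarded as an R-module. Then M is annihilated by f, and over R the module M has the 2-periodic free resolution ⋯ → R^m →^{ψ̄} R^m →^{φ̄} R^m → M → 0; consequently the syzygy module Ω_R(M) = coker ψ̄ satisfies Ω_R(Ω_R(M)) ≅ M (up to shift), i.e., M is its own second syzygy. -/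
/-! Reducing a matrix factorization `A * B = B * A = f • 1` modulo `f` gives `Ā * B̄ = 0`, so
`range B̄ ≤ ker Ā`. Conversely, if `Ā (w mod f) = 0` then `A w = f c` for some `c`, hence
`f • B c = B A w = f • w`, and cancelling the non-zero-divisor `f` gives `w = B c`. So the
reduced complex alternating `B̄` and `Ā` is exact at every spot, and `im ψ̄ ≅ R^m ⧸ ker ψ̄ = coker φ̄`. -/

namespace Matrix

theorem map_mulVec_comp {R S m n : Type*} [NonAssocSemiring R] [NonAssocSemiring S] [Fintype n]
    (g : R →+* S) (A : Matrix m n R) (w : n → R) : A.map g *ᵥ (g ∘ w) = g ∘ (A *ᵥ w) :=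
  funext fun i => (RingHom.map_mulVec g A w i).symm

variable {R : Type*} [CommRing R] {ι : Type*} [Fintype ι] [DecidableEq ι] {f : R} {A B : Matrix ι ι R}

theorem range_mulVecLin_map_mk_le_ker (hAB : A * B = f • 1) :
    LinearMap.range (B.map (Ideal.Quotient.mk (.span {f}))).mulVecLin ≤
      LinearMap.ker (A.map (Ideal.Quotient.mk (.span {f}))).mulVecLin := by
  rintro _ ⟨u, rfl⟩
  rw [LinearMap.mem_ker, mulVecLin_apply, mulVecLin_apply, mulVec_mulVec, ← Matrix.map_mul, hAB,
    Matrix.map_smul' _ _ _ (map_mul _), Ideal.Quotient.mk_singleton_self, zero_smul, zero_mulVec]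

theorem ker_mulVecLin_map_mk_le_range (hf : IsLeftRegular f) (hBA : B * A = f • 1) :
    LinearMap.ker (A.map (Ideal.Quotient.mk (.span {f}))).mulVecLin ≤
      LinearMap.range (B.map (Ideal.Quotient.mk (.span {f}))).mulVecLin := by
  intro v hv
  obtain ⟨w, rfl⟩ := Ideal.Quotient.mk_surjective.comp_left v
  have hdvd (i : ι) : f ∣ (A *ᵥ w) i := by
    rw [← Ideal.mem_span_singleton, ← Ideal.Quotient.eq_zero_iff_mem]
    simpa [map_mulVec_comp] using congrFun (LinearMap.mem_ker.mp hv) i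
  choose c hc using hdvd
  have hAw : A *ᵥ w = f • c := funext hc
  have hBAw : f • (B *ᵥ c) = f • w := by
    rw [← mulVec_smul, ← hAw, mulVec_mulVec, hBA, smul_mulVec, one_mulVec]
  have hBc : B *ᵥ c = w := funext fun i => hf (by simpa using congrFun hBAw i)
  exact ⟨Ideal.Quotient.mk _ ∘ c, by rw [mulVecLin_apply, map_mulVec_comp, hBc]⟩

theorem exact_mulVecLin_map_mk (hf : IsLeftRegular f) (hAB : A * B = f • 1)
    (hBA : B * A = f • 1) :
    Function.Exact (B.map (Ideal.Quotient.mk (.span {f}))).mulVecLin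
      (A.map (Ideal.Quotient.mk (.span {f}))).mulVecLin :=
  LinearMap.exact_iff.mpr <|
    le_antisymm (ker_mulVecLin_map_mk_le_range hf hBA) (range_mulVecLin_map_mk_le_ker hAB)

end Matrix

theorem hypersurface_two_periodicity_general (k : Type*) [Field k] (n m : ℕ)
    (f : MvPolynomial (Fin (n + 1)) k) (hf : f ≠ 0)
    (φ ψ : Matrix (Fin m) (Fin m) (MvPolynomial (Fin (n + 1)) k))
    (h1 : φ * ψ = f • (1 : Matrix (Fin m) (Fin m) (MvPolynomial (Fin (n + 1)) k)))
    (h2 : ψ * φ = f • (1 : Matrix (Fin m) (Fin m) (MvPolynomial (Fin (n + 1)) k))) :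
    (∀ x : (Fin m → MvPolynomial (Fin (n + 1)) k ⧸ Ideal.span {f}) ⧸
        LinearMap.range ((φ.map (Ideal.Quotient.mk (Ideal.span {f}))).mulVecLin),
      (Ideal.Quotient.mk (Ideal.span {f}) f) • x = 0) ∧
    Function.Exact ((ψ.map (Ideal.Quotient.mk (Ideal.span {f}))).mulVecLin)
      ((φ.map (Ideal.Quotient.mk (Ideal.span {f}))).mulVecLin) ∧
    Nonempty
      (↥(LinearMap.range ((ψ.map (Ideal.Quotient.mk (Ideal.span {f}))).mulVecLin))
        ≃ₗ[MvPolynomial (Fin (n + 1)) k ⧸ Ideal.span {f}]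
       ((Fin m → MvPolynomial (Fin (n + 1)) k ⧸ Ideal.span {f}) ⧸
        LinearMap.range ((φ.map (Ideal.Quotient.mk (Ideal.span {f}))).mulVecLin))) := by
  have hreg : IsLeftRegular f := (IsRegular.of_ne_zero hf).left
  have hψφ := Matrix.exact_mulVecLin_map_mk hreg h2 h1
  refine ⟨fun x => ?_, Matrix.exact_mulVecLin_map_mk hreg h1 h2,
    ⟨(LinearMap.quotKerEquivRange _).symm.trans (Submodule.quotEquivOfEq _ _ hψφ.linearMap_ker_eq)⟩⟩
  rw [Ideal.Quotient.mk_singleton_self]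
  exact zero_smul (MvPolynomial (Fin (n + 1)) k ⧸ Ideal.span {f}) x

/-- Eisenbud's 2-periodicity over a hypersurface ring: let `P = k[x₀,…,xₙ]`,
`f` nonzero homogeneous, `R = P/(f)`, and `(φ, ψ)` an `m × m` matrix factorization of
`f` (`φψ = ψφ = f·I`). Let `M = coker φ̄` over `R`. Then `M` is annihilated by `f`,
the 2-periodic complex `⋯ → R^m →^ψ̄ R^m →^φ̄ R^m → M → 0` is exact, and the second
syzygy of `M` (namely `ker φ̄ = im ψ̄`) is isomorphic to `M` itself. -/
theorem hypersurface_two_periodicity (k : Type*) [Field k] (n m : ℕ)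
    (f : MvPolynomial (Fin (n + 1)) k) (hf : f ≠ 0) (d : ℕ) (hhom : f.IsHomogeneous d)
    (φ ψ : Matrix (Fin m) (Fin m) (MvPolynomial (Fin (n + 1)) k))
    (h1 : φ * ψ = f • (1 : Matrix (Fin m) (Fin m) (MvPolynomial (Fin (n + 1)) k)))
    (h2 : ψ * φ = f • (1 : Matrix (Fin m) (Fin m) (MvPolynomial (Fin (n + 1)) k))) :
    (∀ x : (Fin m → MvPolynomial (Fin (n + 1)) k ⧸ Ideal.span {f}) ⧸
        LinearMap.range ((φ.map (Ideal.Quotient.mk (Ideal.span {f}))).mulVecLin),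
      (Ideal.Quotient.mk (Ideal.span {f}) f) • x = 0) ∧
    Function.Exact ((ψ.map (Ideal.Quotient.mk (Ideal.span {f}))).mulVecLin)
      ((φ.map (Ideal.Quotient.mk (Ideal.span {f}))).mulVecLin) ∧
    Nonempty
      (↥(LinearMap.range ((ψ.map (Ideal.Quotient.mk (Ideal.span {f}))).mulVecLin))
        ≃ₗ[MvPolynomial (Fin (n + 1)) k ⧸ Ideal.span {f}]
       ((Fin m → MvPolynomial (Fin (n + 1)) k ⧸ Ideal.span {f}) ⧸
        LinearMap.range ((φ.map (Ideal.Quotient.mk (Ideal.span {f}))).mulVecLin))) :=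
  hypersurface_two_periodicity_general k n m f hf φ ψ h1 h2
end
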